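/- arXiv:1609.07201 — 3 statements merged into one kernel-verified Lean document; each statement's English description precedes it below -/
import Mathlib

section
/- Let A ∈ ℝ^{m×m}. All entries of the matrix exponential e^{At} are nonnegative for every t ≥ 0 if and only if all off-diagonal entries of A are nonnegative (i.e., A is a Metzler matrix). -/
/-!
If `A` is Metzler, then `A + c • 1` is entrywise nonnegative for `c` large, so its exponential,
a convergent series of nonnegative matrices, is nonnegative; and `e^{A} = e^{-c} e^{A + c • 1}`.
Conversely, for `i ≠ j` the entry `t ↦ (e^{tA}) i j` vanishes at `0` and is nonnegative for
`t ≥ 0`, so its derivative `A i j` at `0` is nonnegative.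
-/

open NormedSpace Set

theorem HasDerivAt.nonneg_of_isMinOn_Ici {f : ℝ → ℝ} {f' a : ℝ} (hf : HasDerivAt f f' a)
    (hmin : IsMinOn f (Ici a) a) : 0 ≤ f' := by
  have hcone : (1 : ℝ) ∈ posTangentConeAt (Ici a) a :=
    mem_posTangentConeAt_of_segment_subset
      ((segment_subset_Icc (by simp)).trans Icc_subset_Ici_self)
  simpa using hmin.localize.hasFDerivWithinAt_nonneg hf.hasFDerivAt.hasFDerivWithinAt hcone

namespace Matrix

variable {n R : Type*}

def IsMetzler [Zero R] [LE R] (A : Matrix n n R) : Prop :=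
  ∀ i j, i ≠ j → 0 ≤ A i j

theorem IsMetzler.smul [Semiring R] [PartialOrder R] [IsOrderedRing R] {A : Matrix n n R}
    (hA : A.IsMetzler) {t : R} (ht : 0 ≤ t) : (t • A).IsMetzler :=
  fun i j hij => mul_nonneg ht (hA i j hij)

variable [Fintype n] [DecidableEq n]

theorem exp_apply_nonneg {B : Matrix n n ℝ} (hB : ∀ i j, 0 ≤ B i j) (i j : n) :
    0 ≤ exp B i j := by
  -- `exp` does not depend on the norm; any Banach algebra norm gives the convergent series.
  let : NormedRing (Matrix n n ℝ) := Matrix.linftyOpNormedRing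
  let : NormedAlgebra ℝ (Matrix n n ℝ) := Matrix.linftyOpNormedAlgebra
  have hsum := Pi.hasSum.1 (Pi.hasSum.1 (exp_series_hasSum_exp' (𝕂 := ℝ) B) i) j
  exact hasSum_le (fun k => mul_nonneg (by positivity) (pow_apply_nonneg hB k i j))
    hasSum_zero hsum

theorem exp_add_smul_one (X : Matrix n n ℝ) (r : ℝ) :
    exp (X + r • (1 : Matrix n n ℝ)) = Real.exp r • exp X := by
  rw [exp_add_of_commute _ _ ((Commute.one_right X).smul_right r), smul_one_eq_diagonal,
    exp_diagonal, Pi.exp_def, ← smul_one_eq_diagonal, mul_smul_comm, mul_one,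
    Real.exp_eq_exp_ℝ]

theorem hasDerivAt_exp_smul_apply (A : Matrix n n ℝ) (i j : n) (t : ℝ) :
    HasDerivAt (fun s : ℝ => exp (s • A) i j) ((exp (t • A) * A) i j) t := by
  let : NormedRing (Matrix n n ℝ) := Matrix.linftyOpNormedRing
  let : NormedAlgebra ℝ (Matrix n n ℝ) := Matrix.linftyOpNormedAlgebra
  exact (entryLinearMap ℝ ℝ i j).toContinuousLinearMap.hasFDerivAt.comp_hasDerivAt t
    (hasDerivAt_exp_smul_const A t)

namespace IsMetzler

theorem exists_nonneg_add_smul_one [Ring R] [LinearOrder R] [IsOrderedRing R]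
    {A : Matrix n n R} (hA : A.IsMetzler) :
    ∃ c : R, ∀ i j, 0 ≤ (A + c • (1 : Matrix n n R)) i j := by
  refine ⟨∑ k, |A k k|, fun i j => ?_⟩
  rcases eq_or_ne i j with rfl | hij
  · have hdiag : |A i i| ≤ ∑ k, |A k k| :=
      Finset.single_le_sum (f := fun k => |A k k|) (fun k _ => abs_nonneg _) (Finset.mem_univ i)
    simp only [add_apply, smul_apply, one_apply_eq, smul_eq_mul, mul_one]
    exact neg_le_iff_add_nonneg'.mp ((neg_le_abs _).trans hdiag)
  · simpa [one_apply_ne hij] using hA i j hij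

theorem exp_apply_nonneg {A : Matrix n n ℝ} (hA : A.IsMetzler) (i j : n) :
    0 ≤ exp A i j := by
  obtain ⟨c, hc⟩ := hA.exists_nonneg_add_smul_one
  have hshift : A = (A + c • (1 : Matrix n n ℝ)) + (-c) • (1 : Matrix n n ℝ) := by
    rw [add_assoc, ← add_smul, add_neg_cancel, zero_smul, add_zero]
  rw [hshift, exp_add_smul_one, smul_apply, smul_eq_mul]
  exact mul_nonneg (Real.exp_pos _).le (Matrix.exp_apply_nonneg hc i j)

theorem of_exp_smul_apply_nonneg {A : Matrix n n ℝ}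
    (h : ∀ t : ℝ, 0 ≤ t → ∀ i j, 0 ≤ exp (t • A) i j) : A.IsMetzler := by
  intro i j hij
  refine HasDerivAt.nonneg_of_isMinOn_Ici (a := 0) (f := fun t => exp (t • A) i j)
    (by simpa using hasDerivAt_exp_smul_apply A i j 0) fun t ht => ?_
  simpa [one_apply_ne hij] using h t ht i j

end IsMetzler

end Matrix

/-- All entries of `e^{tA}` are nonnegative for every `t ≥ 0` iff all
off-diagonal entries of `A` are nonnegative (i.e. `A` is Metzler). -/
theorem matrix_exp_nonneg_iff_metzler (m : ℕ) (A : Matrix (Fin m) (Fin m) ℝ) :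
    (∀ t : ℝ, 0 ≤ t → ∀ i j, 0 ≤ NormedSpace.exp (t • A) i j) ↔
      (∀ i j, i ≠ j → 0 ≤ A i j) :=
  ⟨Matrix.IsMetzler.of_exp_smul_apply_nonneg,
    fun hA t ht => (Matrix.IsMetzler.smul hA ht).exp_apply_nonneg⟩
end

section
/- Power transformation of a linear comparison system: Suppose scalars ã_ij (i,j ∈ {1,…,m}) with ã_ij ≥ 0 for i ≠ j, positive constants c̃_ij > 0 for i ≠ j, and nonnegative differentiable functions v_i : [0,∞) → ℝ_{≥0} satisfy v_i'(t) ≤ ∑_j ã_ij v_j(t) for all t, and ã_ii + ∑_{j≠i} ã_ij c̃_ij < 0 for every i. Then for any integer d ≥ 1, the functions V_i = v_i^d satisfy V_i'(t) ≤ ∑_j a_ij V_j(t), where a_ii = d·ã_ii + (d−1)·∑_{j≠i} ã_ij c̃_ij and a_ij = ã_ij · c̃_ij^{1−d} for j ≠ i; moreover a_ii + ∑_{j≠i} a_ij (c̃_ij)^d < 0 for every i. -/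
/-!
Multiplying `v_i' ≤ ∑_j ã_ij v_j` by `d v_i^(d-1)` leaves the cross terms `d v_i^(d-1) v_j`,
which Young's inequality (here a consequence of Bernoulli's inequality), scaled by `c̃_ij`,
bounds by `(d-1) c̃_ij v_i^d + c̃_ij^(1-d) v_j^d`. Collecting terms gives the matrix `a`, and
since `a_ij c̃_ij^d = ã_ij c̃_ij`, the new row sum is `d` times the old one.
-/

open Finset

theorem nat_mul_pow_pred_mul_le {x y : ℝ} (hx : 0 ≤ x) (hy : 0 ≤ y) (d : ℕ) :
    d * x ^ (d - 1) * y ≤ (d - 1) * x ^ d + y ^ d := by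
  cases d with
  | zero => simp
  | succ k =>
  rw [Nat.add_sub_cancel]
  push_cast
  rcases hx.eq_or_lt with rfl | hx
  · rcases k with _ | k <;> simp [pow_nonneg hy]
  have bernoulli := one_add_mul_le_pow (a := y / x - 1) (by linarith [div_nonneg hy hx.le]) (k + 1)
  rw [add_sub_cancel] at bernoulli
  have scaled := mul_le_mul_of_nonneg_left bernoulli (pow_nonneg hx.le (k + 1))
  have hxy : x ^ (k + 1) * (y / x) = x ^ k * y := by rw [pow_succ]; field_simp
  rw [← mul_pow, mul_div_cancel₀ _ hx.ne'] at scaled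
  push_cast at scaled
  linear_combination scaled - (k + 1) * hxy

theorem nat_mul_pow_pred_mul_le_of_pos {u w c : ℝ} (hu : 0 ≤ u) (hw : 0 ≤ w) (hc : 0 < c)
    (d : ℕ) : d * u ^ (d - 1) * w ≤ (d - 1) * c * u ^ d + c ^ ((1 : ℤ) - d) * w ^ d := by
  cases d with
  | zero => simp
  | succ k =>
  -- Young's inequality at `(c * u, w)`, divided by `c ^ k`
  have young := nat_mul_pow_pred_mul_le (mul_nonneg hc.le hu) hw (k + 1)
  have hck : c ^ ((1 : ℤ) - (k + 1 : ℕ)) = (c ^ k)⁻¹ := by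
    rw [show (1 : ℤ) - (k + 1 : ℕ) = -k by push_cast; ring, zpow_neg, zpow_natCast]
  rw [hck, Nat.add_sub_cancel]
  rw [Nat.add_sub_cancel] at young
  have scaled := mul_le_mul_of_nonneg_left young (inv_nonneg.2 (pow_nonneg hc.le k))
  field_simp at scaled ⊢
  linear_combination scaled

theorem nat_mul_pow_pred_mul_sum_le {ι : Type*} [Fintype ι] [DecidableEq ι] {d : ℕ}
    (hd : d ≠ 0) {a c x : ι → ℝ} {i : ι} (ha : ∀ j ≠ i, 0 ≤ a j)
    (hc : ∀ j ≠ i, 0 < c j) (hx : ∀ j, 0 ≤ x j) :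
    d * x i ^ (d - 1) * ∑ j, a j * x j ≤
      (d * a i + (d - 1) * ∑ j ∈ univ.erase i, a j * c j) * x i ^ d +
        ∑ j ∈ univ.erase i, a j * c j ^ ((1 : ℤ) - d) * x j ^ d := by
  have off_diag : ∀ j ∈ univ.erase i, d * x i ^ (d - 1) * (a j * x j) ≤
      (d - 1) * (a j * c j) * x i ^ d + a j * c j ^ ((1 : ℤ) - d) * x j ^ d := by
    intro j hj
    have hji := ne_of_mem_erase hj
    linear_combination mul_le_mul_of_nonneg_left
      (nat_mul_pow_pred_mul_le_of_pos (hx i) (hx j) (hc j hji) d) (ha j hji)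
  calc d * x i ^ (d - 1) * ∑ j, a j * x j
      = d * a i * x i ^ d + ∑ j ∈ univ.erase i, d * x i ^ (d - 1) * (a j * x j) := by
        rw [← add_sum_erase _ _ (mem_univ i), mul_add, mul_sum, ← pow_sub_one_mul hd]
        ring
    _ ≤ d * a i * x i ^ d + ∑ j ∈ univ.erase i,
          ((d - 1) * (a j * c j) * x i ^ d + a j * c j ^ ((1 : ℤ) - d) * x j ^ d) := by
        gcongr with j hj
        exact off_diag j hj
    _ = _ := by
        rw [sum_add_distrib, ← sum_mul, ← mul_sum]
        ring

/-- Power transformation of a linear comparison system: if nonnegative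
differentiable `v i` satisfy `v' ≤ Ã v` with `Ã` Metzler and
`ã_ii + ∑_{j≠i} ã_ij c̃_ij < 0`, then `V i = (v i)^d` satisfies
`V' ≤ A V` for the explicitly transformed matrix `A`, which moreover
satisfies `a_ii + ∑_{j≠i} a_ij c̃_ij^d < 0`. -/
theorem power_transform_comparison_system (m d : ℕ) (hd : 1 ≤ d)
    (ta : Fin m → Fin m → ℝ) (hta : ∀ i j, i ≠ j → 0 ≤ ta i j)
    (tc : Fin m → Fin m → ℝ) (htc : ∀ i j, i ≠ j → 0 < tc i j)
    (v v' : ℝ → Fin m → ℝ)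
    (hnonneg : ∀ t i, 0 ≤ v t i)
    (hderiv : ∀ i t, HasDerivAt (fun s => v s i) (v' t i) t)
    (hineq : ∀ t i, v' t i ≤ ∑ j, ta i j * v t j)
    (hrow : ∀ i, ta i i + ∑ j ∈ univ.erase i, ta i j * tc i j < 0)
    (a : Fin m → Fin m → ℝ)
    (ha_diag : ∀ i, a i i =
      (d : ℝ) * ta i i + ((d : ℝ) - 1) * ∑ j ∈ univ.erase i, ta i j * tc i j)
    (ha_off : ∀ i j, i ≠ j → a i j = ta i j * tc i j ^ ((1 : ℤ) - d)) :
    (∀ t i, HasDerivAt (fun s => v s i ^ d) ((d : ℝ) * v t i ^ (d - 1) * v' t i) t) ∧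
    (∀ t i, (d : ℝ) * v t i ^ (d - 1) * v' t i ≤ ∑ j, a i j * v t j ^ d) ∧
    (∀ i, a i i + ∑ j ∈ univ.erase i, a i j * tc i j ^ d < 0) := by
  refine ⟨fun t i => (hderiv i t).pow d, fun t i => ?_, fun i => ?_⟩
  · calc (d : ℝ) * v t i ^ (d - 1) * v' t i
        ≤ d * v t i ^ (d - 1) * ∑ j, ta i j * v t j :=
          mul_le_mul_of_nonneg_left (hineq t i) (by have := hnonneg t i; positivity)
      _ ≤ _ := nat_mul_pow_pred_mul_sum_le (a := ta i) (c := tc i) (by omega)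
          (fun j hj => hta i j hj.symm) (fun j hj => htc i j hj.symm) (hnonneg t)
      _ = a i i * v t i ^ d + ∑ j ∈ univ.erase i, a i j * v t j ^ d := by
          rw [ha_diag]
          congr 1
          exact sum_congr rfl fun j hj => by rw [ha_off i j (ne_of_mem_erase hj).symm]
      _ = ∑ j, a i j * v t j ^ d := add_sum_erase _ (fun j => a i j * v t j ^ d) (mem_univ i)
  · have off_diag :
        ∑ j ∈ univ.erase i, a i j * tc i j ^ d = ∑ j ∈ univ.erase i, ta i j * tc i j := by
      refine sum_congr rfl fun j hj => ?_
      have hij := (ne_of_mem_erase hj).symm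
      rw [ha_off i j hij, mul_assoc, ← zpow_natCast, ← zpow_add₀ (htc i j hij).ne',
        sub_add_cancel, zpow_one]
    have hd' : (1 : ℝ) ≤ d := by exact_mod_cast hd
    rw [ha_diag, off_diag]
    nlinarith [hrow i]
end

section
/- Invariance of joint sublevel sets: Consider an interconnected system ẋ_i = f_i(x_i) + g_i(x), i = 1,…,m, with continuously differentiable Lyapunov functions V_i and positive scalars γ_i^0. Suppose for each i there exist scalars a_ij (j ∈ N_i, a_ij ≥ 0 for j ≠ i) such that d/dt V_i(x_i) ≤ ∑_{j∈N_i} a_ij V_j(x_j) for all x in the set D = {x : V_j(x_j) ≤ γ_j^0 for all j}, and ∑_{j∈N_i} a_ij γ_j^0 < 0 for every i. Then D is positively invariant: any solution with x(0) ∈ D satisfies x(t) ∈ D for all t ≥ 0. -/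
open Finset Filter Topology Set

/-- Invariance of joint sublevel sets for an interconnected system:
if `∇V_i(x_i)ᵀ(f_i(x_i) + g_i(x)) ≤ ∑_{j ∈ N_i} a_ij V_j(x_j)` on
`D = {x : V_j(x_j) ≤ γ_j⁰ ∀j}` with `a_ij ≥ 0` for `j ≠ i` and
`∑_{j ∈ N_i} a_ij γ_j⁰ < 0`, then `D` is positively invariant. -/
theorem joint_sublevel_invariance (m : ℕ) (n : Fin m → ℕ)
    (V : ∀ i, EuclideanSpace ℝ (Fin (n i)) → ℝ)
    (hV : ∀ i, ContDiff ℝ 1 (V i))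
    (hVpos : ∀ i y, 0 ≤ V i y)
    (f : ∀ i, EuclideanSpace ℝ (Fin (n i)) → EuclideanSpace ℝ (Fin (n i)))
    (g : ∀ i, (∀ j, EuclideanSpace ℝ (Fin (n j))) → EuclideanSpace ℝ (Fin (n i)))
    (N : Fin m → Finset (Fin m)) (hN : ∀ i, i ∈ N i)
    (a : Fin m → Fin m → ℝ) (ha : ∀ i j, j ∈ N i → i ≠ j → 0 ≤ a i j)
    (γ : Fin m → ℝ) (hγ : ∀ i, 0 < γ i)
    (hcomp : ∀ x : ∀ j, EuclideanSpace ℝ (Fin (n j)),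
      (∀ j, V j (x j) ≤ γ j) →
      ∀ i, fderiv ℝ (V i) (x i) (f i (x i) + g i x) ≤ ∑ j ∈ N i, a i j * V j (x j))
    (hinv : ∀ i, ∑ j ∈ N i, a i j * γ j < 0)
    (x : ℝ → ∀ j, EuclideanSpace ℝ (Fin (n j)))
    (hx : ∀ i, ∀ t, 0 ≤ t →
      HasDerivAt (fun s => x s i) (f i (x t i) + g i (x t)) t)
    (hx0 : ∀ i, V i (x 0 i) ≤ γ i) :
    ∀ t, 0 ≤ t → ∀ i, V i (x t i) ≤ γ i := by
  by_contra hcon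
  push_neg at hcon
  obtain ⟨t0, ht0, i0, hi0⟩ := hcon
  set U : Set ℝ := {t | t ∈ Set.Icc (0:ℝ) t0 ∧ ∃ j, γ j < V j (x t j)} with hUdef
  have ht0U : t0 ∈ U := ⟨⟨ht0, le_rfl⟩, i0, hi0⟩
  have hUne : U.Nonempty := ⟨t0, ht0U⟩
  have hUbdd : BddBelow U := ⟨0, fun t ht => ht.1.1⟩
  set τ := sInf U with hτdef
  have hτ0 : 0 ≤ τ := le_csInf hUne fun t ht => ht.1.1
  have hτt0 : τ ≤ t0 := csInf_le hUbdd ht0U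
  have hW : ∀ j s, 0 ≤ s → HasDerivAt (fun u => V j (x u j))
      (fderiv ℝ (V j) (x s j) (f j (x s j) + g j (x s))) s := by
    intro j s hs
    have hdV : HasFDerivAt (V j) (fderiv ℝ (V j) (x s j)) (x s j) :=
      ((hV j).differentiable one_ne_zero (x s j)).hasFDerivAt
    exact hdV.comp_hasDerivAt s (hx j s hs)
  have hWc : ∀ j s, 0 ≤ s → ContinuousAt (fun u => V j (x u j)) s :=
    fun j s hs => (hW j s hs).continuousAt
  -- τ itself is not an exit point
  have hτU : τ ∉ U := by
    intro hmem
    obtain ⟨hIcc, j, hj⟩ := hmem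
    have hev : ∀ᶠ s in 𝓝 τ, γ j < V j (x s j) :=
      (hWc j τ hτ0).eventually (eventually_gt_nhds hj)
    rcases eq_or_lt_of_le hτ0 with h0 | h0
    · exact absurd hj (not_lt.2 (by rw [← h0]; exact hx0 j))
    · have hpos : ∀ᶠ s in 𝓝 τ, 0 < s := eventually_gt_nhds h0
      have hevU : ∀ᶠ s in 𝓝[<] τ, s ∈ U := by
        filter_upwards [nhdsWithin_le_nhds (hev.and hpos), self_mem_nhdsWithin]
          with s hs hlt
        exact ⟨⟨hs.2.le, hlt.le.trans hτt0⟩, j, hs.1⟩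
      obtain ⟨s, hsU, hsτ⟩ := (hevU.and self_mem_nhdsWithin).exists
      exact absurd hsU (notMem_of_lt_csInf hsτ hUbdd)
  have hτle : ∀ j, V j (x τ j) ≤ γ j := by
    intro j; by_contra h; push_neg at h
    exact hτU ⟨⟨hτ0, hτt0⟩, j, h⟩
  -- there are points of U arbitrarily close to τ from the right
  have hfreq : ∃ᶠ s in 𝓝[>] τ, s ∈ U := by
    have hcl : τ ∈ closure U := csInf_mem_closure hUne hUbdd
    rw [mem_closure_iff_frequently] at hcl
    rw [frequently_nhdsWithin_iff]
    refine hcl.mono fun s hs => ⟨hs, ?_⟩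
    have h1 : τ ≤ s := csInf_le hUbdd hs
    exact lt_of_le_of_ne h1 (fun h => hτU (h ▸ hs))
  -- but eventually to the right of τ all constraints hold
  have hev : ∀ᶠ s in 𝓝[>] τ, ∀ i, V i (x s i) ≤ γ i := by
    rw [Filter.eventually_all]
    intro i
    rcases lt_or_eq_of_le (hτle i) with hlt | heq
    · have h1 : ∀ᶠ s in 𝓝 τ, V i (x s i) < γ i :=
        (hWc i τ hτ0).eventually (eventually_lt_nhds hlt)
      filter_upwards [nhdsWithin_le_nhds h1] with s hs using hs.le
    · have hd := hW i τ hτ0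
      set d := fderiv ℝ (V i) (x τ i) (f i (x τ i) + g i (x τ)) with hdd
      have hdneg : d < 0 := by
        have h1 : d ≤ ∑ j ∈ N i, a i j * V j (x τ j) := hcomp (x τ) hτle i
        have h2 : ∑ j ∈ N i, a i j * V j (x τ j) ≤ ∑ j ∈ N i, a i j * γ j := by
          apply Finset.sum_le_sum
          intro j hj
          rcases eq_or_ne i j with rfl | hne
          · rw [heq]
          · exact mul_le_mul_of_nonneg_left (hτle j) (ha i j hj hne)
        linarith [hinv i]
      have hslope : Tendsto (slope (fun u => V i (x u i)) τ) (𝓝[≠] τ) (𝓝 d) :=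
        hasDerivAt_iff_tendsto_slope.mp hd
      have hneg : ∀ᶠ s in 𝓝[≠] τ, slope (fun u => V i (x u i)) τ s < 0 :=
        hslope.eventually (eventually_lt_nhds hdneg)
      have hneg' : ∀ᶠ s in 𝓝[>] τ, slope (fun u => V i (x u i)) τ s < 0 :=
        nhdsWithin_mono τ (fun s hs => ne_of_gt hs) hneg
      filter_upwards [hneg', self_mem_nhdsWithin] with s hs hs'
      rw [slope_def_field] at hs
      have hpos : (0:ℝ) < s - τ := sub_pos.2 hs'
      have hnum : V i (x s i) - V i (x τ i) < 0 := by
        by_contra hge; push_neg at hge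
        exact absurd hs (not_lt.2 (div_nonneg hge hpos.le))
      linarith [heq]
  obtain ⟨s, hsU, hsle⟩ := (hfreq.and_eventually hev).exists
  obtain ⟨_, j, hj⟩ := hsU
  exact absurd (hsle j) (not_le.2 hj)
end
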